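/- The set of potentially stable points is open and backward-invariant, and for any stationary probability measure ρ, ρ-almost every potentially stable point is almost surely stable. -/

import Mathlib

open MeasureTheory ProbabilityTheory Filter Topology

/-- A (discrete-time) filtered random dynamical system over a memoryless stationary
noise space, on a metric space `X`. -/
structure MRDS (Ω X : Type*) [mΩ : MeasurableSpace Ω] [MetricSpace X]
    [mX : MeasurableSpace X] [BorelSpace X] where
  P : Measure Ω
  hprob : IsProbabilityMeasure P
  F : ℕ → MeasurableSpace Ω
  hle : ∀ t, F t ≤ mΩ
  hmono : Monotone F
  θ : ℕ → Ω → Ω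
  hθ0 : θ 0 = id
  hθadd : ∀ s t, θ (s + t) = θ s ∘ θ t
  hθmeas : ∀ s t, @Measurable Ω Ω (F (s + t)) (F s) (θ t)
  hθpres : ∀ t, MeasurePreserving (θ t) P P
  memless : ∀ s, Indep (F s) ((⨆ t, F t).comap (θ s)) P
  φ : ℕ → Ω → X → X
  hφcont : ∀ t ω, Continuous (φ t ω)
  hφmeas : ∀ t, @Measurable (Ω × X) X ((F t).prod mX) mX (fun p => φ t p.1 p.2)
  hφ0 : ∀ ω, φ 0 ω = id
  hφcocycle : ∀ s t ω, φ (s + t) ω = φ t (θ s ω) ∘ φ s ω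

namespace MRDS

variable {Ω X : Type*} [MeasurableSpace Ω] [MetricSpace X]
  [MeasurableSpace X] [BorelSpace X]

/-- The one-point transition probabilities `φ_x^t`. -/
noncomputable def law (R : MRDS Ω X) (x : X) (t : ℕ) : Measure X :=
  R.P.map (fun ω => R.φ t ω x)

/-- A closed set that is forward-invariant for the one-point transition probabilities. -/
def FwdInv (R : MRDS Ω X) (K : Set X) : Prop :=
  IsClosed K ∧ ∀ x ∈ K, ∀ t, R.law x t K = 1

/-- A minimal set: non-empty, closed, forward-invariant, with no proper non-empty closed
forward-invariant subsets. -/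
def Minimal (R : MRDS Ω X) (K : Set X) : Prop :=
  K.Nonempty ∧ R.FwdInv K ∧ ∀ K' ⊆ K, R.FwdInv K' → K' = K ∨ K' = ∅

/-- `A` contracts under the noise realisation `ω`. -/
def contracts (R : MRDS Ω X) (ω : Ω) (A : Set X) : Prop :=
  Tendsto (fun t => EMetric.diam (R.φ t ω '' A)) atTop (𝓝 0)

/-- `(ω, x)` is an asymptotically stable pair. -/
def stablePair (R : MRDS Ω X) (ω : Ω) (x : X) : Prop :=
  ∃ U ∈ 𝓝 x, R.contracts ω U

/-- The set of asymptotically stable pairs. -/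
def O (R : MRDS Ω X) : Set (Ω × X) := {p | R.stablePair p.1 p.2}

/-- The set of noise realisations under which `U` contracts. -/
def EU (R : MRDS Ω X) (U : Set X) : Set Ω := {ω | R.contracts ω U}

/-- `x` is potentially stable. -/
def potStable (R : MRDS Ω X) (x : X) : Prop := 0 < R.P {ω | R.stablePair ω x}

/-- `x` is almost surely stable. -/
def asStable (R : MRDS Ω X) (x : X) : Prop := R.P {ω | R.stablePair ω x} = 1

/-- `φ` is globally synchronising. -/
def synchronising (R : MRDS Ω X) : Prop :=
  ∀ x y : X,
    R.P {ω | Tendsto (fun t => dist (R.φ t ω x) (R.φ t ω y)) atTop (𝓝 0)} = 1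

/-- `φ` is stably synchronising. -/
def stablySynchronising (R : MRDS Ω X) : Prop :=
  R.synchronising ∧ ∀ x : X, R.asStable x

/-- `ρ` is a stationary measure for the one-point transition probabilities. -/
def stationary (R : MRDS Ω X) (ρ : Measure X) : Prop :=
  ∀ t, ∀ A : Set X, MeasurableSet A → ∫⁻ x, R.law x t A ∂ρ = ρ A

end MRDS


/-!
A pair `(ω, x)` is stable iff some set of a countable basis around `x` contracts under `ω`, so
the potentially stable points form a union of basic open sets. Let `p x` be the probability that
`x` is stable. By the cocycle property, stability of `φ t ω x` under the shifted noise `θ t ω`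
implies stability of `x` under `ω`, and memorylessness makes the shifted noise independent of
`F t`; hence `p (φ t ω x)` is the conditional probability given `F t` of being stable after
time `t`, and `∫ p dφ_x^t ≤ p x`. This excessiveness of `p` gives backward invariance. For
stationary `ρ` the two sides have the same `ρ`-integral, so equality holds `ρ`-a.e.; then
`p (φ t ω x)` is the martingale `P[stable at x | F t]`, which by Lévy's upward theorem tends to
`0` or `1`. So `p (1 - p)` along the orbit tends to `0`, while stationarity keeps its
`ρ`-integral constant; hence `p ∈ {0, 1}` `ρ`-a.e.
-/

open scoped ENNReal
open TopologicalSpace Metric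

section Diameter

variable {α X : Type*} [PseudoEMetricSpace X]

theorem ediam_image_eq_iSup (f : α → X) (s : Set α) :
    ediam (f '' s) = ⨆ (x : s) (y : s), edist (f x) (f y) :=
  le_antisymm (ediam_image_le_iff.2 fun x hx y hy => le_iSup₂_of_le ⟨x, hx⟩ ⟨y, hy⟩ le_rfl)
    (iSup₂_le fun x y => edist_le_ediam_of_mem (Set.mem_image_of_mem f x.2)
      (Set.mem_image_of_mem f y.2))

theorem Continuous.ediam_image_eq_of_subset_closure [TopologicalSpace α] {f : α → X}
    (hf : Continuous f) {s t : Set α} (hts : t ⊆ s) (hst : s ⊆ closure t) :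
    ediam (f '' s) = ediam (f '' t) := by
  refine le_antisymm ?_ (ediam_mono (Set.image_mono hts))
  calc ediam (f '' s) ≤ ediam (closure (f '' t)) :=
        ediam_mono ((Set.image_mono hst).trans (image_closure_subset_closure_image hf))
    _ = ediam (f '' t) := ediam_closure _

theorem measurable_ediam_image {Ω : Type*} {mΩ : MeasurableSpace Ω} [TopologicalSpace α]
    [SeparableSpace α] [MeasurableSpace X] [OpensMeasurableSpace X] [SecondCountableTopology X]
    {f : Ω → α → X}
    (hcont : ∀ ω, Continuous (f ω)) (hmeas : ∀ x, Measurable fun ω => f ω x) {U : Set α}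
    (hU : IsOpen U) : Measurable fun ω => ediam (f ω '' U) := by
  obtain ⟨D, hDc, hD⟩ := exists_countable_dense α
  have : Countable ↥(U ∩ D) := (hDc.mono Set.inter_subset_right).to_subtype
  simp only [fun ω => (hcont ω).ediam_image_eq_of_subset_closure Set.inter_subset_left
    (hD.open_subset_closure_inter hU), ediam_image_eq_iSup]
  exact Measurable.iSup fun x => Measurable.iSup fun y => (hmeas x).edist (hmeas y)

end Diameter

section Independence

variable {Ω α β : Type*} {mΩ : MeasurableSpace Ω} [MeasurableSpace α] [MeasurableSpace β]
  {μ : Measure Ω} [IsFiniteMeasure μ] {f : Ω → α} {g : Ω → β}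

theorem ProbabilityTheory.IndepFun.measure_preimage_prod (hfg : IndepFun f g μ)
    (hf : Measurable f) (hg : Measurable g) {T : Set (α × β)} (hT : MeasurableSet T) :
    μ ((fun ω => (f ω, g ω)) ⁻¹' T) = ∫⁻ ω, μ (g ⁻¹' (Prod.mk (f ω) ⁻¹' T)) ∂μ := by
  rw [← Measure.map_apply (hf.prodMk hg) hT,
    (indepFun_iff_map_prod_eq_prod_map_map hf.aemeasurable hg.aemeasurable).1 hfg,
    Measure.prod_apply hT, lintegral_map (measurable_measure_prodMk_left hT) hf]
  exact lintegral_congr fun ω => Measure.map_apply hg (measurable_prodMk_left hT)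

theorem ProbabilityTheory.Indep.measure_inter_preimage_prod {m : MeasurableSpace Ω}
    (hm : m ≤ mΩ) (hind : Indep m (MeasurableSpace.comap g inferInstance) μ)
    (hf : Measurable[m] f) (hg : Measurable[mΩ] g) {s : Set Ω} (hs : MeasurableSet[m] s)
    {T : Set (α × β)} (hT : MeasurableSet T) :
    μ (s ∩ (fun ω => (f ω, g ω)) ⁻¹' T) = ∫⁻ ω in s, μ (g ⁻¹' (Prod.mk (f ω) ⁻¹' T)) ∂μ := by
  have hsf : Measurable[m] fun ω => (ω ∈ s, f ω) :=
    (measurableSet_setOfPred.1 hs).prodMk hf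
  have hT' : MeasurableSet {q : (Prop × α) × β | q.1.1 ∧ (q.1.2, q.2) ∈ T} :=
    (measurableSet_setOfPred.2 (measurable_fst.comp measurable_fst)).inter
      ((measurable_snd.comp measurable_fst).prodMk measurable_snd hT)
  have hindep : IndepFun (fun ω => (ω ∈ s, f ω)) g μ :=
    indep_of_indep_of_le_left hind (measurable_iff_comap_le.1 hsf)
  rw [← lintegral_indicator (hm s hs)]
  convert hindep.measure_preimage_prod (hsf.mono hm le_rfl) hg hT' using 1
  · congr 1
  · refine lintegral_congr fun ω => ?_
    by_cases hω : ω ∈ s <;> simp [hω, Set.preimage]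

end Independence

namespace MRDS

variable {Ω X : Type*} [MeasurableSpace Ω] [MetricSpace X] [MeasurableSpace X] [BorelSpace X]
  (R : MRDS Ω X)

theorem contracts.mono {R : MRDS Ω X} {ω : Ω} {A A' : Set X} (hc : R.contracts ω A')
    (h : A ⊆ A') : R.contracts ω A :=
  tendsto_of_tendsto_of_tendsto_of_le_of_le tendsto_const_nhds hc (fun _ => zero_le)
    fun _ => ediam_mono (Set.image_mono h)

theorem stablePair.of_shift {R : MRDS Ω X} {t : ℕ} {ω : Ω} {x : X}
    (h : R.stablePair (R.θ t ω) (R.φ t ω x)) : R.stablePair ω x := by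
  obtain ⟨V, hV, hc⟩ := h
  refine ⟨R.φ t ω ⁻¹' V, (R.hφcont t ω).continuousAt.preimage_mem_nhds hV, ?_⟩
  have hshift : Tendsto (fun r => ediam (R.φ (r - t) (R.θ t ω) '' V)) atTop (𝓝 0) :=
    hc.comp (tendsto_sub_atTop_nat t)
  refine tendsto_of_tendsto_of_tendsto_of_le_of_le' tendsto_const_nhds hshift
    (Eventually.of_forall fun _ => zero_le) (eventually_atTop.2 ⟨t, fun r hr => ?_⟩)
  rw [← Nat.add_sub_cancel' hr, R.hφcocycle, Set.image_comp, Nat.add_sub_cancel_left]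
  exact ediam_mono (Set.image_mono (Set.image_preimage_subset _ _))

theorem measurable_φ_apply_F (t : ℕ) (x : X) : Measurable[R.F t] fun ω => R.φ t ω x :=
  (R.hφmeas t).comp (measurable_id.prodMk measurable_const)

theorem measurable_φ_apply (t : ℕ) (x : X) : Measurable fun ω => R.φ t ω x :=
  (R.measurable_φ_apply_F t x).mono (R.hle t) le_rfl

theorem measurable_law (t : ℕ) : Measurable fun x => R.law x t := by
  have hφ : Measurable fun p : Ω × X => R.φ t p.1 p.2 :=
    (R.hφmeas t).mono (sup_le_sup_right (MeasurableSpace.comap_mono (R.hle t)) _) le_rfl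
  refine Measure.measurable_of_measurable_coe _ fun A hA => ?_
  simp_rw [law, Measure.map_apply (R.measurable_φ_apply t _) hA]
  have := R.hprob
  exact measurable_measure_prodMk_right (hφ hA)

theorem isProbabilityMeasure_law (x : X) (t : ℕ) : IsProbabilityMeasure (R.law x t) :=
  have := R.hprob
  Measure.isProbabilityMeasure_map (R.measurable_φ_apply t x).aemeasurable

variable {R} in
theorem stationary.lintegral_lintegral_law {ρ : Measure X} (hρ : R.stationary ρ) (t : ℕ)
    {u : X → ℝ≥0∞} (hu : Measurable u) :
    ∫⁻ x, ∫⁻ y, u y ∂(R.law x t) ∂ρ = ∫⁻ y, u y ∂ρ := by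
  have hbind : ρ.bind (fun x => R.law x t) = ρ := Measure.ext fun A hA => by
    rw [Measure.bind_apply hA (R.measurable_law t).aemeasurable, hρ t A hA]
  conv_rhs => rw [← hbind]
  rw [Measure.lintegral_bind (R.measurable_law t).aemeasurable hu.aemeasurable]

variable {R} in
theorem stationary.lintegral_eq_zero_of_tendsto {ρ : Measure X} [IsFiniteMeasure ρ]
    (hρ : R.stationary ρ) {u : X → ℝ≥0∞} (hu : Measurable u) {C : ℝ≥0∞} (hC : C ≠ ∞)
    (huC : ∀ y, u y ≤ C)
    (hlim : ∀ᵐ x ∂ρ, ∀ᵐ ω ∂ R.P, Tendsto (fun t => u (R.φ t ω x)) atTop (𝓝 0)) :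
    ∫⁻ y, u y ∂ρ = 0 := by
  have := R.hprob
  have hlaw : ∀ t x, ∫⁻ y, u y ∂(R.law x t) = ∫⁻ ω, u (R.φ t ω x) ∂ R.P := fun t x =>
    lintegral_map hu (R.measurable_φ_apply t x)
  have hmeas : ∀ t, Measurable fun x => ∫⁻ ω, u (R.φ t ω x) ∂ R.P := fun t => by
    simp_rw [← hlaw]
    exact (Measure.measurable_lintegral hu).comp (R.measurable_law t)
  have hinner : ∀ᵐ x ∂ρ, Tendsto (fun t => ∫⁻ ω, u (R.φ t ω x) ∂ R.P) atTop (𝓝 0) :=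
    hlim.mono fun x hx => by
      simpa using tendsto_lintegral_of_dominated_convergence (fun _ => C)
        (fun t => hu.comp (R.measurable_φ_apply t x)) (fun t => ae_of_all _ fun ω => huC _)
        (by simpa using hC) hx
  have houter := tendsto_lintegral_of_dominated_convergence (fun _ => C) hmeas
    (fun t => ae_of_all _ fun x => (lintegral_mono fun ω => huC _).trans (by simp))
    (by simpa using ENNReal.mul_ne_top hC (measure_ne_top ρ _)) hinner
  simp_rw [← hlaw, hρ.lintegral_lintegral_law _ hu, lintegral_zero] at houter
  exact tendsto_nhds_unique tendsto_const_nhds houter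

def probStable (x : X) : ℝ≥0∞ := R.P {ω | R.stablePair ω x}

theorem probStable_le_one (x : X) : R.probStable x ≤ 1 :=
  have := R.hprob
  prob_le_one

variable [SecondCountableTopology X]

theorem stablePair_iff {ω : Ω} {x : X} :
    R.stablePair ω x ↔ ∃ b ∈ countableBasis X, x ∈ b ∧ R.contracts ω b := by
  constructor
  · rintro ⟨U, hU, hc⟩
    obtain ⟨b, hb, hxb, hbU⟩ := (isBasis_countableBasis X).mem_nhds_iff.1 hU
    exact ⟨b, hb, hxb, hc.mono hbU⟩
  · rintro ⟨b, hb, hxb, hc⟩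
    exact ⟨b, (isBasis_countableBasis X).mem_nhds hb hxb, hc⟩

theorem potStable_iff {x : X} :
    R.potStable x ↔ ∃ b ∈ countableBasis X, x ∈ b ∧ 0 < R.P (R.EU b) := by
  have hunion : {ω | R.stablePair ω x} = ⋃ b ∈ {b ∈ countableBasis X | x ∈ b}, R.EU b := by
    ext ω
    simp [R.stablePair_iff, EU, and_assoc]
  rw [potStable, hunion, pos_iff_ne_zero, Ne,
    measure_biUnion_null_iff ((countable_countableBasis X).mono (Set.sep_subset _ _))]
  simp [pos_iff_ne_zero]

theorem isOpen_setOf_potStable : IsOpen {x | R.potStable x} := by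
  refine isOpen_iff_forall_mem_open.2 fun x hx => ?_
  obtain ⟨b, hb, hxb, hpos⟩ := R.potStable_iff.1 hx
  exact ⟨b, fun y hy => R.potStable_iff.2 ⟨b, hb, hy, hpos⟩, isOpen_of_mem_countableBasis hb, hxb⟩

theorem measurableSet_EU {U : Set X} (hU : IsOpen U) : MeasurableSet[⨆ t, R.F t] (R.EU U) :=
  measurableSet_tendsto (𝓝 0) fun t =>
    (measurable_ediam_image (R.hφcont t) (R.measurable_φ_apply_F t) hU).mono (le_iSup R.F t) le_rfl

/-- Coding `ω` by the basic open sets it contracts gives a random variable with values in a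
standard measurable space, and stability becomes membership of `(x, pattern)` in a fixed
measurable set (`markedPairs`); this is how the independence in `memless` gets applied. -/
def contractionPattern (ω : Ω) : countableBasis X → Prop := fun b => R.contracts ω b

theorem measurable_contractionPattern_iSup_F : Measurable[⨆ t, R.F t] R.contractionPattern :=
  @measurable_pi_lambda _ _ _ (⨆ t, R.F t) _ _ fun b =>
    (@measurableSet_setOfPred _ (⨆ t, R.F t) _).1
      (R.measurableSet_EU (isOpen_of_mem_countableBasis b.2))

variable (X) in
def markedPairs : Set (X × (countableBasis X → Prop)) :=
  {q | ∃ b : countableBasis X, q.1 ∈ (b : Set X) ∧ q.2 b}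

theorem measurableSet_markedPairs : MeasurableSet (markedPairs X) := by
  have : Countable (countableBasis X) := (countable_countableBasis X).to_subtype
  have hunion : markedPairs X = ⋃ b : countableBasis X, (b : Set X) ×ˢ {p | p b} := by
    ext
    simp [markedPairs]
  rw [hunion]
  exact .iUnion fun b => (isOpen_of_mem_countableBasis b.2).measurableSet.prod
    (measurableSet_setOfPred.2 (measurable_pi_apply b))

theorem stablePair_iff_mem_markedPairs {ω : Ω} {x : X} :
    R.stablePair ω x ↔ (x, R.contractionPattern ω) ∈ markedPairs X := by
  simp [stablePair_iff, markedPairs, contractionPattern, and_left_comm]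

theorem probStable_eq_measure_preimage (x : X) :
    R.probStable x = R.P (R.contractionPattern ⁻¹' (Prod.mk x ⁻¹' markedPairs X)) := by
  simp only [probStable, stablePair_iff_mem_markedPairs]
  rfl

theorem measurable_contractionPattern : Measurable R.contractionPattern :=
  R.measurable_contractionPattern_iSup_F.mono (iSup_le R.hle) le_rfl

theorem measurable_probStable : Measurable R.probStable := by
  have := R.hprob
  have hmap : R.probStable
      = fun x => R.P.map R.contractionPattern (Prod.mk x ⁻¹' markedPairs X) := funext fun x => by
    rw [Measure.map_apply R.measurable_contractionPattern
      (measurable_prodMk_left measurableSet_markedPairs), probStable_eq_measure_preimage]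
  rw [hmap]
  exact measurable_measure_prodMk_left measurableSet_markedPairs

/-- Memorylessness makes the pattern of the shifted noise `θ t ω` independent of `F t`, so the
`F t`-measurable position `φ t ω x` can be frozen. -/
theorem measure_inter_stablePair_shift (t : ℕ) (x : X) {s : Set Ω}
    (hs : MeasurableSet[R.F t] s) :
    R.P (s ∩ {ω | R.stablePair (R.θ t ω) (R.φ t ω x)})
      = ∫⁻ ω in s, R.probStable (R.φ t ω x) ∂ R.P := by
  have := R.hprob
  have hcomap : MeasurableSpace.comap (R.contractionPattern ∘ R.θ t) inferInstance
      ≤ (⨆ t, R.F t).comap (R.θ t) := by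
    rw [← MeasurableSpace.comap_comp]
    exact MeasurableSpace.comap_mono
      (measurable_iff_comap_le.1 R.measurable_contractionPattern_iSup_F)
  have hind := indep_of_indep_of_le_right (R.memless t) hcomap
  have key := hind.measure_inter_preimage_prod (R.hle t) (R.measurable_φ_apply_F t x)
    (R.measurable_contractionPattern.comp (R.hθpres t).measurable) hs measurableSet_markedPairs
  simp_rw [stablePair_iff_mem_markedPairs, probStable_eq_measure_preimage]
  exact key.trans (lintegral_congr fun ω => (R.hθpres t).measure_preimage
    (R.measurable_contractionPattern
      (measurable_prodMk_left measurableSet_markedPairs)).nullMeasurableSet)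

theorem measure_stablePair_shift (t : ℕ) (x : X) :
    R.P {ω | R.stablePair (R.θ t ω) (R.φ t ω x)} = ∫⁻ y, R.probStable y ∂(R.law x t) := by
  rw [law, lintegral_map R.measurable_probStable (R.measurable_φ_apply t x), ← setLIntegral_univ,
    ← R.measure_inter_stablePair_shift t x MeasurableSet.univ, Set.univ_inter]

theorem measurableSet_stablePair_shift (t : ℕ) (x : X) :
    MeasurableSet {ω | R.stablePair (R.θ t ω) (R.φ t ω x)} := by
  simp_rw [stablePair_iff_mem_markedPairs]
  exact (R.measurable_φ_apply t x).prodMk (R.measurable_contractionPattern.comp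
    (R.hθpres t).measurable) measurableSet_markedPairs

theorem lintegral_probStable_law_le (x : X) (t : ℕ) :
    ∫⁻ y, R.probStable y ∂(R.law x t) ≤ R.probStable x := by
  rw [← R.measure_stablePair_shift]
  exact measure_mono fun ω => stablePair.of_shift

theorem law_setOf_potStable_eq_zero {y : X} (hy : ¬ R.potStable y) (t : ℕ) :
    R.law y t {x | R.potStable x} = 0 := by
  have hzero : ∫⁻ x, R.probStable x ∂(R.law y t) = 0 :=
    le_antisymm ((R.lintegral_probStable_law_le y t).trans (not_lt.1 hy)) zero_le
  have hae := (lintegral_eq_zero_iff R.measurable_probStable).1 hzero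
  rw [Filter.EventuallyEq, ae_iff] at hae
  simpa [potStable, probStable, pos_iff_ne_zero] using hae

variable {R} in
theorem stationary.ae_lintegral_probStable_law_eq {ρ : Measure X} [IsFiniteMeasure ρ]
    (hρ : R.stationary ρ) :
    ∀ᵐ x ∂ρ, ∀ t, ∫⁻ y, R.probStable y ∂(R.law x t) = R.probStable x := by
  refine ae_all_iff.2 fun t => ae_eq_of_ae_le_of_lintegral_le
    (ae_of_all _ fun x => R.lintegral_probStable_law_le x t) ?_
    R.measurable_probStable.aemeasurable (hρ.lintegral_lintegral_law t R.measurable_probStable).ge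
  rw [hρ.lintegral_lintegral_law t R.measurable_probStable]
  exact ((lintegral_mono R.probStable_le_one).trans_lt (by simp [measure_lt_top])).ne

theorem stablePair_ae_eq_shift {x : X} {t : ℕ}
    (hx : ∫⁻ y, R.probStable y ∂(R.law x t) = R.probStable x) :
    {ω | R.stablePair (R.θ t ω) (R.φ t ω x)} =ᵐ[R.P] {ω | R.stablePair ω x} :=
  have := R.hprob
  ae_eq_of_subset_of_measure_ge (fun _ => stablePair.of_shift)
    (by rw [R.measure_stablePair_shift, hx]; rfl)
    (R.measurableSet_stablePair_shift t x).nullMeasurableSet (measure_ne_top _ _)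

theorem measurableSet_setOf_stablePair (x : X) :
    MeasurableSet[⨆ t, R.F t] {ω | R.stablePair ω x} := by
  simp_rw [stablePair_iff_mem_markedPairs]
  exact (measurable_const.prodMk R.measurable_contractionPattern_iSup_F) measurableSet_markedPairs

theorem condExp_indicator_setOf_stablePair {x : X} {t : ℕ}
    (hx : ∫⁻ y, R.probStable y ∂(R.law x t) = R.probStable x) :
    R.P[{ω | R.stablePair ω x}.indicator 1 | R.F t]
      =ᵐ[R.P] fun ω => (R.probStable (R.φ t ω x)).toReal := by
  have := R.hprob
  have hA := R.measurableSet_stablePair_shift t x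
  have hG : StronglyMeasurable[R.F t] fun ω => (R.probStable (R.φ t ω x)).toReal :=
    (R.measurable_probStable.comp (R.measurable_φ_apply_F t x)).ennreal_toReal.stronglyMeasurable
  have hGint : Integrable (fun ω => (R.probStable (R.φ t ω x)).toReal) R.P := by
    refine .of_bound (hG.mono (R.hle t)).aestronglyMeasurable 1 (ae_of_all _ fun ω => ?_)
    simpa using ENNReal.toReal_mono ENNReal.one_ne_top (R.probStable_le_one _)
  refine (condExp_congr_ae (indicator_ae_eq_of_ae_eq_set (R.stablePair_ae_eq_shift hx).symm)).trans
    (ae_eq_condExp_of_forall_setIntegral_eq (R.hle t) ((integrable_const 1).indicator hA)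
      (fun s _ _ => hGint.integrableOn) (fun s hs _ => ?_) hG.aestronglyMeasurable).symm
  rw [integral_toReal (f := fun ω => R.probStable (R.φ t ω x))
    (R.measurable_probStable.comp (R.measurable_φ_apply t x)).aemeasurable
    (ae_of_all _ fun ω => (R.probStable_le_one _).trans_lt ENNReal.one_lt_top),
    ← R.measure_inter_stablePair_shift t x hs, integral_indicator_one hA,
    Measure.real, Measure.restrict_apply hA, Set.inter_comm]

theorem tendsto_probStable_φ {x : X}
    (hx : ∀ t, ∫⁻ y, R.probStable y ∂(R.law x t) = R.probStable x) :
    ∀ᵐ ω ∂ R.P, Tendsto (fun t => (R.probStable (R.φ t ω x)).toReal) atTop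
      (𝓝 ({ω | R.stablePair ω x}.indicator 1 ω)) := by
  have := R.hprob
  have hA := R.measurableSet_setOf_stablePair x
  have hlevy := ((integrable_const (μ := R.P) (1 : ℝ)).indicator
    (iSup_le R.hle _ hA)).tendsto_ae_condExp (ℱ := ⟨R.F, R.hmono, R.hle⟩)
    (stronglyMeasurable_const.indicator hA)
  filter_upwards [hlevy, ae_all_iff.2 fun t => R.condExp_indicator_setOf_stablePair (hx t)]
    with ω hω hcond
  exact (tendsto_congr hcond).1 hω

theorem stationary.measure_potStable_diff_asStable {ρ : Measure X} [IsFiniteMeasure ρ]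
    (hρ : R.stationary ρ) : ρ ({x | R.potStable x} \ {x | R.asStable x}) = 0 := by
  set h : ℝ → ℝ≥0∞ := fun q => ENNReal.ofReal (q * (1 - q)) with h_def
  have hcont : Continuous h := ENNReal.continuous_ofReal.comp (by fun_prop)
  have hmeas : Measurable fun y => h (R.probStable y).toReal :=
    hcont.measurable.comp R.measurable_probStable.ennreal_toReal
  have hzero : ∫⁻ y, h (R.probStable y).toReal ∂ρ = 0 := by
    refine hρ.lintegral_eq_zero_of_tendsto hmeas ENNReal.one_ne_top
      (fun y => ENNReal.ofReal_le_one.2 ?_) ?_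
    · nlinarith [sq_nonneg ((R.probStable y).toReal - 1 / 2)]
    filter_upwards [hρ.ae_lintegral_probStable_law_eq] with x hx
    filter_upwards [R.tendsto_probStable_φ hx] with ω hω
    have hlim : h ({ω | R.stablePair ω x}.indicator 1 ω) = 0 := by
      by_cases hstable : R.stablePair ω x <;> simp [h_def, hstable]
    exact hlim ▸ (hcont.tendsto _).comp hω
  refine measure_mono_null (fun y ⟨hpot, hnas⟩ => ?_)
    (ae_iff.1 ((lintegral_eq_zero_iff hmeas).1 hzero))
  have hp1 : R.probStable y < 1 := (R.probStable_le_one y).lt_of_ne hnas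
  have hq0 : 0 < (R.probStable y).toReal :=
    ENNReal.toReal_pos hpot.ne' (hp1.trans ENNReal.one_lt_top).ne
  have hq1 : (R.probStable y).toReal < 1 := by
    simpa using (ENNReal.toReal_lt_toReal (hp1.trans ENNReal.one_lt_top).ne
      ENNReal.one_ne_top).2 hp1
  simpa [h_def] using And.intro hq0 hq1

end MRDS

/-- The set of potentially stable points is open and backward-invariant (its complement is
forward-invariant for the transition probabilities), and for any stationary probability
measure `ρ`, `ρ`-almost every potentially stable point is almost surely stable. -/
theorem stmt9 {Ω X : Type*} [MeasurableSpace Ω] [MetricSpace X] [CompactSpace X]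
    [MeasurableSpace X] [BorelSpace X] (R : MRDS Ω X) :
    IsOpen {x : X | R.potStable x} ∧
    (∀ y ∈ {x : X | R.potStable x}ᶜ, ∀ t, R.law y t {x : X | R.potStable x}ᶜ = 1) ∧
    ∀ ρ : Measure X, IsProbabilityMeasure ρ → R.stationary ρ →
      ρ ({x : X | R.potStable x} \ {x : X | R.asStable x}) = 0 := by
  refine ⟨R.isOpen_setOf_potStable, fun y hy t => ?_,
    fun ρ _ hρ => hρ.measure_potStable_diff_asStable⟩
  have := R.isProbabilityMeasure_law y t
  exact (prob_compl_eq_one_iff R.isOpen_setOf_potStable.measurableSet).2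
    (R.law_setOf_potStable_eq_zero hy t)
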